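/- arXiv:2308.06180 — 3 statements merged into one kernel-verified Lean document; each statement's English description precedes it below -/
import Mathlib

section
/- There exist constants C_j > 0 (j ≥ 1), depending only on j, ρ̄ and μ, such that for all x₃ ∈ ℝ and t ≥ 0: (i) |∂₃^j θ(x₃,t)| ≤ C_j (t+Λ)^{−(j−1)/2} κ(x₃,t) for every integer j ≥ 1; (ii) |∂₃ θ(x₃,t)|² ≤ C₁ Λ^{−1/2} κ(x₃,t); (iii) |∂₃² θ(x₃,t)| ≤ C₂ κ(x₃,t)²; and (iv) |∂_t ∂₃ θ(x₃,t)| ≤ C₃ Λ^{−1/2} κ(x₃,t)². -/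
open Real MeasureTheory Filter Topology

/-- The self-similar profile `Θ(ξ) = (2/√π) ∫₀^{(1/2)√(ρ̄/μ) ξ} e^{-η²} dη`. -/
noncomputable def Theta (ρb μ : ℝ) (ξ : ℝ) : ℝ :=
  (2 / Real.sqrt Real.pi) * ∫ η in (0:ℝ)..((1/2) * Real.sqrt (ρb/μ) * ξ), Real.exp (-η^2)

/-- `θ(x₃,t) = Θ(x₃/√(t+Λ))`. -/
noncomputable def theta (ρb μ Λ : ℝ) (x t : ℝ) : ℝ :=
  Theta ρb μ (x / Real.sqrt (t + Λ))

/-- The weight `κ(x₃,t) = (t+Λ)^{-1/2} exp(-ρ̄x₃²/(32μ(t+Λ)))`. -/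
noncomputable def kappa (ρb μ Λ : ℝ) (x t : ℝ) : ℝ :=
  (t + Λ) ^ (-(1:ℝ)/2) * Real.exp (-(ρb * x^2) / (32 * μ * (t + Λ)))

noncomputable def gss : ℝ → ℝ := fun ξ => Real.exp (-ξ^2)

lemma gss_contDiff : ContDiff ℝ (⊤ : ℕ∞) gss :=
  Real.contDiff_exp.comp ((contDiff_id.pow 2).neg)

lemma gss_hasDerivAt (ξ : ℝ) :
    HasDerivAt gss (Real.exp (-ξ^2) * (-(2*ξ))) ξ := by
  have h : HasDerivAt (fun ξ : ℝ => -ξ^2) (-(2*ξ)) ξ := by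
    exact (by simpa using (hasDerivAt_pow 2 ξ).neg : HasDerivAt (-fun x : ℝ => x^2) (-(2*ξ)) ξ)
  exact h.exp

lemma gauss_iter (n : ℕ) : ∃ P : Polynomial ℝ, ∀ ξ : ℝ,
    iteratedDeriv n gss ξ = P.eval ξ * Real.exp (-ξ^2) := by
  induction n with
  | zero => exact ⟨1, fun ξ => by simp [gss]⟩
  | succ n ih =>
    obtain ⟨P, hP⟩ := ih
    refine ⟨Polynomial.derivative P - Polynomial.C 2 * Polynomial.X * P, fun ξ => ?_⟩
    rw [iteratedDeriv_succ, funext hP]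
    have h2 : HasDerivAt (fun ξ : ℝ => P.eval ξ * Real.exp (-ξ^2))
        ((Polynomial.derivative P).eval ξ * Real.exp (-ξ^2)
          + P.eval ξ * (Real.exp (-ξ^2) * (-(2*ξ)))) ξ :=
      (P.hasDerivAt ξ).mul (gss_hasDerivAt ξ)
    rw [h2.deriv]
    simp only [Polynomial.eval_sub, Polynomial.eval_mul, Polynomial.eval_C, Polynomial.eval_X]
    ring

lemma monomial_gauss_bound (n : ℕ) {c : ℝ} (hc : 0 < c) (ξ : ℝ) :
    |ξ|^n * Real.exp (-(c*ξ^2)) ≤ 1 + n.factorial / c^n := by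
  have hfac : (0:ℝ) ≤ n.factorial / c^n := by positivity
  rcases le_or_gt |ξ| 1 with h | h
  · have h1 : |ξ|^n ≤ 1 := pow_le_one₀ (abs_nonneg ξ) h
    have h2 : Real.exp (-(c*ξ^2)) ≤ 1 := Real.exp_le_one_iff.mpr (by nlinarith [sq_nonneg ξ])
    nlinarith [pow_nonneg (abs_nonneg ξ) n, Real.exp_pos (-(c*ξ^2))]
  · have h1 : |ξ|^n ≤ (ξ^2)^n := by
      calc |ξ|^n ≤ (|ξ|^2)^n := by
            rw [← pow_mul]
            exact pow_le_pow_right₀ h.le (by omega)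
        _ = (ξ^2)^n := by rw [sq_abs]
    have hu : 0 ≤ c * ξ^2 := by positivity
    have h2 : (c*ξ^2)^n ≤ n.factorial * Real.exp (c*ξ^2) := by
      have hsum := Real.sum_le_exp_of_nonneg hu (n+1)
      have hterm : (c*ξ^2)^n / n.factorial ≤ ∑ i ∈ Finset.range (n+1), (c*ξ^2)^i / i.factorial :=
        Finset.single_le_sum (f := fun i => (c*ξ^2)^i / (i.factorial:ℝ))
          (fun i _ => by positivity) (Finset.self_mem_range_succ n)
      have hfacpos : (0:ℝ) < n.factorial := by positivity
      rw [div_le_iff₀ hfacpos] at hterm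
      calc (c*ξ^2)^n ≤ (∑ i ∈ Finset.range (n+1), (c*ξ^2)^i / i.factorial) * n.factorial := hterm
        _ ≤ Real.exp (c*ξ^2) * n.factorial := by gcongr
        _ = n.factorial * Real.exp (c*ξ^2) := mul_comm _ _
    have h3 : (ξ^2)^n * Real.exp (-(c*ξ^2)) ≤ n.factorial / c^n := by
      have hcn : (0:ℝ) < c^n := by positivity
      have h4 : (ξ^2)^n ≤ n.factorial * Real.exp (c*ξ^2) / c^n := by
        rw [le_div_iff₀ hcn]
        calc (ξ^2)^n * c^n = (c*ξ^2)^n := by rw [mul_pow]; ring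
          _ ≤ _ := h2
      calc (ξ^2)^n * Real.exp (-(c*ξ^2))
          ≤ (n.factorial * Real.exp (c*ξ^2) / c^n) * Real.exp (-(c*ξ^2)) :=
            mul_le_mul_of_nonneg_right h4 (Real.exp_pos _).le
        _ = n.factorial / c^n * (Real.exp (c*ξ^2) * Real.exp (-(c*ξ^2))) := by ring
        _ = n.factorial / c^n := by rw [← Real.exp_add]; simp
    calc |ξ|^n * Real.exp (-(c*ξ^2)) ≤ (ξ^2)^n * Real.exp (-(c*ξ^2)) := by
          gcongr
      _ ≤ n.factorial / c^n := h3
      _ ≤ 1 + n.factorial / c^n := by linarith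

lemma poly_gauss_bound (P : Polynomial ℝ) {c : ℝ} (hc : 0 < c) :
    ∃ M : ℝ, ∀ ξ : ℝ, |P.eval ξ| * Real.exp (-(c*ξ^2)) ≤ M := by
  induction P using Polynomial.induction_on' with
  | add p q hp hq =>
    obtain ⟨Mp, hMp⟩ := hp; obtain ⟨Mq, hMq⟩ := hq
    refine ⟨Mp + Mq, fun ξ => ?_⟩
    have h1 : |(p+q).eval ξ| ≤ |p.eval ξ| + |q.eval ξ| := by
      rw [Polynomial.eval_add]; exact abs_add_le _ _
    calc |(p+q).eval ξ| * Real.exp (-(c*ξ^2))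
        ≤ (|p.eval ξ| + |q.eval ξ|) * Real.exp (-(c*ξ^2)) := by gcongr
      _ = |p.eval ξ| * Real.exp (-(c*ξ^2)) + |q.eval ξ| * Real.exp (-(c*ξ^2)) := by ring
      _ ≤ Mp + Mq := add_le_add (hMp ξ) (hMq ξ)
  | monomial n a =>
    refine ⟨|a| * (1 + n.factorial / c^n), fun ξ => ?_⟩
    rw [Polynomial.eval_monomial, abs_mul, abs_pow, mul_assoc]
    exact mul_le_mul_of_nonneg_left (monomial_gauss_bound n hc ξ) (abs_nonneg a)

lemma gauss_iter_bound (n : ℕ) {δ : ℝ} (hδ0 : 0 < δ) (hδ1 : δ < 1) :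
    ∃ M : ℝ, 0 < M ∧ ∀ ξ : ℝ, |iteratedDeriv n gss ξ| ≤ M * Real.exp (-(δ*ξ^2)) := by
  obtain ⟨P, hP⟩ := gauss_iter n
  obtain ⟨M, hM⟩ := poly_gauss_bound P (c := 1-δ) (by linarith)
  refine ⟨max M 1, lt_of_lt_of_le one_pos (le_max_right _ _), fun ξ => ?_⟩
  have h1 : |iteratedDeriv n gss ξ| = |P.eval ξ| * Real.exp (-ξ^2) := by
    rw [hP ξ, abs_mul, abs_of_pos (Real.exp_pos _)]
  have h2 : Real.exp (-ξ^2) = Real.exp (-((1-δ)*ξ^2)) * Real.exp (-(δ*ξ^2)) := by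
    rw [← Real.exp_add]; ring_nf
  rw [h1, h2, ← mul_assoc]
  have h3 : |P.eval ξ| * Real.exp (-((1-δ)*ξ^2)) ≤ max M 1 := (hM ξ).trans (le_max_left _ _)
  exact mul_le_mul_of_nonneg_right h3 (Real.exp_pos _).le

noncomputable def Gint : ℝ → ℝ := fun y => ∫ η in (0:ℝ)..y, Real.exp (-η^2)

lemma Gint_hasDerivAt (y : ℝ) : HasDerivAt Gint (Real.exp (-y^2)) y :=
  (Continuous.integral_hasStrictDerivAt (by fun_prop) 0 y).hasDerivAt

lemma theta_eq (ρb μ Λ t : ℝ) :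
    (fun y => theta ρb μ Λ y t)
      = fun y => (2/Real.sqrt Real.pi)
          * Gint ((1/2)*Real.sqrt (ρb/μ)/Real.sqrt (t+Λ) * y) := by
  funext y
  have h : (1/2)*Real.sqrt (ρb/μ)*(y/Real.sqrt (t+Λ))
      = (1/2)*Real.sqrt (ρb/μ)/Real.sqrt (t+Λ)*y := by ring
  simp only [theta, Theta, Gint, h]

lemma theta_hasDerivAt (ρb μ Λ t x : ℝ) :
    HasDerivAt (fun y => theta ρb μ Λ y t)
      ((2/Real.sqrt Real.pi) * ((1/2)*Real.sqrt (ρb/μ)/Real.sqrt (t+Λ))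
        * gss ((1/2)*Real.sqrt (ρb/μ)/Real.sqrt (t+Λ) * x)) x := by
  rw [theta_eq]
  set b := (1/2)*Real.sqrt (ρb/μ)/Real.sqrt (t+Λ) with hb
  have hlin : HasDerivAt (fun y : ℝ => b * y) b x := by
    simpa using (hasDerivAt_id x).const_mul b
  have h := ((Gint_hasDerivAt (b*x)).comp x hlin).const_mul (2/Real.sqrt Real.pi)
  refine h.congr_deriv ?_
  simp [gss]
  ring

lemma theta_deriv (ρb μ Λ t : ℝ) :
    deriv (fun y => theta ρb μ Λ y t)
      = fun x => (2/Real.sqrt Real.pi) * ((1/2)*Real.sqrt (ρb/μ)/Real.sqrt (t+Λ))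
          * gss ((1/2)*Real.sqrt (ρb/μ)/Real.sqrt (t+Λ) * x) :=
  funext fun x => (theta_hasDerivAt ρb μ Λ t x).deriv

lemma theta_iteratedDeriv (ρb μ Λ t x : ℝ) (m : ℕ) :
    iteratedDeriv (m+1) (fun y => theta ρb μ Λ y t) x
      = (2/Real.sqrt Real.pi) * ((1/2)*Real.sqrt (ρb/μ)/Real.sqrt (t+Λ))^(m+1)
          * iteratedDeriv m gss ((1/2)*Real.sqrt (ρb/μ)/Real.sqrt (t+Λ) * x) := by
  rw [iteratedDeriv_succ', theta_deriv]
  set b := (1/2)*Real.sqrt (ρb/μ)/Real.sqrt (t+Λ) with hb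
  have hcd : ContDiff ℝ (m:ℕ∞) (fun y : ℝ => gss (b*y)) :=
    (gss_contDiff.of_le (mod_cast le_top)).comp (contDiff_const.mul contDiff_id)
  have h1 : iteratedDeriv m (fun y => (2/Real.sqrt Real.pi) * b * gss (b*y)) x
      = (2/Real.sqrt Real.pi) * b * iteratedDeriv m (fun y => gss (b*y)) x := by
    simp only [← iteratedDerivWithin_univ]
    exact iteratedDerivWithin_const_mul (Set.mem_univ x) uniqueDiffOn_univ
      ((2/Real.sqrt Real.pi) * b) hcd.contDiffWithinAt
  rw [h1, iteratedDeriv_comp_const_mul (gss_contDiff.of_le (mod_cast le_top)) b]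
  ring

lemma stmt10_part1 (ρb μ : ℝ) (hρb : 0 < ρb) (hμ : 0 < μ) (m : ℕ) :
    ∃ C : ℝ, 0 < C ∧ ∀ Λ : ℝ, 1 ≤ Λ → ∀ x t : ℝ, 0 ≤ t →
      |iteratedDeriv (m+1) (fun y => theta ρb μ Λ y t) x|
        ≤ C * (t + Λ) ^ (-(((m+1:ℕ):ℝ) - 1)/2) * kappa ρb μ Λ x t := by
  have hπ : (0:ℝ) < Real.sqrt Real.pi := Real.sqrt_pos.mpr Real.pi_pos
  have hA : (0:ℝ) < (1/2) * Real.sqrt (ρb/μ) := by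
    have := Real.sqrt_pos.mpr (div_pos hρb hμ); linarith
  obtain ⟨M, hM0, hM⟩ := gauss_iter_bound m (δ := 1/8) (by norm_num) (by norm_num)
  refine ⟨(2/Real.sqrt Real.pi) * ((1/2)*Real.sqrt (ρb/μ))^(m+1) * M, by positivity,
    fun Λ hΛ x t ht => ?_⟩
  have hT : (0:ℝ) < t + Λ := by linarith
  have hsT : 0 < Real.sqrt (t+Λ) := Real.sqrt_pos.mpr hT
  have hsT2 : Real.sqrt (t+Λ)^2 = t+Λ := Real.sq_sqrt hT.le
  have ha2 : ((1/2) * Real.sqrt (ρb/μ))^2 = ρb/(4*μ) := by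
    rw [mul_pow, Real.sq_sqrt (div_nonneg hρb.le hμ.le)]
    field_simp
    try ring
    try tauto
  rw [theta_iteratedDeriv]
  set A := (1/2) * Real.sqrt (ρb/μ) with hAdef
  set sT := Real.sqrt (t+Λ) with hsTdef
  have hbx : (1/8 : ℝ) * (A/sT*x)^2 = ρb * x^2 / (32 * μ * (t+Λ)) := by
    have h1 : (A/sT*x)^2 = A^2*x^2/sT^2 := by ring
    rw [h1, hsT2, ha2]
    field_simp
    try ring
    try tauto
  have hkap : kappa ρb μ Λ x t = sT⁻¹ * Real.exp (-(ρb * x^2) / (32 * μ * (t + Λ))) := by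
    unfold kappa
    rw [show (-(1:ℝ)/2) = -(1/2:ℝ) by norm_num, Real.rpow_neg hT.le, ← Real.sqrt_eq_rpow]
  have hpow : (t+Λ) ^ (-(((m+1:ℕ):ℝ) - 1)/2) = (sT⁻¹)^m := by
    have h1 : (-(((m+1:ℕ):ℝ) - 1)/2) = (-(1/2):ℝ) * m := by push_cast; ring
    rw [h1, Real.rpow_mul hT.le, Real.rpow_natCast]
    congr 1
    rw [show (-(1/2):ℝ) = -(1/2:ℝ) by norm_num, Real.rpow_neg hT.le, ← Real.sqrt_eq_rpow]
  calc |2/Real.sqrt Real.pi * (A/sT)^(m+1) * iteratedDeriv m gss (A/sT*x)|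
      = 2/Real.sqrt Real.pi * (A/sT)^(m+1) * |iteratedDeriv m gss (A/sT*x)| := by
        rw [abs_mul, abs_of_nonneg (by positivity)]
    _ ≤ 2/Real.sqrt Real.pi * (A/sT)^(m+1) * (M * Real.exp (-(1/8 * (A/sT*x)^2))) := by
        gcongr
        exact hM _
    _ = 2/Real.sqrt Real.pi * A^(m+1) * M * ((sT⁻¹)^m
          * (sT⁻¹ * Real.exp (-(ρb * x^2) / (32 * μ * (t + Λ))))) := by
        rw [hbx, div_eq_mul_inv A sT, mul_pow, pow_succ]
        ring
    _ = 2/Real.sqrt Real.pi * A^(m+1) * M * ((t+Λ) ^ (-(((m+1:ℕ):ℝ) - 1)/2)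
          * kappa ρb μ Λ x t) := by rw [hkap, hpow]
    _ = 2/Real.sqrt Real.pi * A^(m+1) * M * (t+Λ) ^ (-(((m+1:ℕ):ℝ) - 1)/2)
          * kappa ρb μ Λ x t := by ring

lemma stmt10_part2 (ρb μ : ℝ) (hρb : 0 < ρb) (hμ : 0 < μ) :
    ∃ C : ℝ, 0 < C ∧ ∀ Λ : ℝ, 1 ≤ Λ → ∀ x t : ℝ, 0 ≤ t →
      |deriv (fun y => theta ρb μ Λ y t) x| ^ 2
        ≤ C * Λ ^ (-(1:ℝ)/2) * kappa ρb μ Λ x t := by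
  have hπ : (0:ℝ) < Real.sqrt Real.pi := Real.sqrt_pos.mpr Real.pi_pos
  have hA : (0:ℝ) < (1/2) * Real.sqrt (ρb/μ) := by
    have := Real.sqrt_pos.mpr (div_pos hρb hμ); linarith
  refine ⟨(2/Real.sqrt Real.pi)^2 * ((1/2)*Real.sqrt (ρb/μ))^2, by positivity,
    fun Λ hΛ x t ht => ?_⟩
  have hΛ0 : (0:ℝ) < Λ := by linarith
  have hT : (0:ℝ) < t + Λ := by linarith
  have hsT : 0 < Real.sqrt (t+Λ) := Real.sqrt_pos.mpr hT
  have hsΛ : 0 < Real.sqrt Λ := Real.sqrt_pos.mpr hΛ0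
  have hsT2 : Real.sqrt (t+Λ)^2 = t+Λ := Real.sq_sqrt hT.le
  have ha2 : ((1/2) * Real.sqrt (ρb/μ))^2 = ρb/(4*μ) := by
    rw [mul_pow, Real.sq_sqrt (div_nonneg hρb.le hμ.le)]
    field_simp
    try ring
    try tauto
  rw [(theta_hasDerivAt ρb μ Λ t x).deriv]
  set A := (1/2) * Real.sqrt (ρb/μ) with hAdef
  set sT := Real.sqrt (t+Λ) with hsTdef
  have hkap : kappa ρb μ Λ x t = sT⁻¹ * Real.exp (-(ρb * x^2) / (32 * μ * (t + Λ))) := by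
    unfold kappa
    rw [show (-(1:ℝ)/2) = -(1/2:ℝ) by norm_num, Real.rpow_neg hT.le, ← Real.sqrt_eq_rpow]
  have hkapΛ : Λ ^ (-(1:ℝ)/2) = (Real.sqrt Λ)⁻¹ := by
    rw [show (-(1:ℝ)/2) = -(1/2:ℝ) by norm_num, Real.rpow_neg hΛ0.le, ← Real.sqrt_eq_rpow]
  have hbx : (A/sT*x)^2 = ρb * x^2 / (4 * μ * (t+Λ)) := by
    have h1 : (A/sT*x)^2 = A^2*x^2/sT^2 := by ring
    rw [h1, hsT2, ha2]
    field_simp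
    try ring
    try tauto
  have habs : |2/Real.sqrt Real.pi * (A/sT) * gss (A/sT*x)|
      = 2/Real.sqrt Real.pi * (A/sT) * Real.exp (-(A/sT*x)^2) := by
    rw [abs_of_nonneg]
    · rfl
    · unfold gss; positivity
  rw [habs]
  have hTinv : sT⁻¹ * sT⁻¹ ≤ (Real.sqrt Λ)⁻¹ * sT⁻¹ := by
    gcongr
    exact Real.sqrt_le_sqrt (by linarith)
  have hexp : Real.exp (-(A/sT*x)^2) ^ 2 ≤ Real.exp (-(ρb * x^2) / (32 * μ * (t + Λ))) := by
    have h2 : Real.exp (-(A/sT*x)^2) ^ 2 = Real.exp (-(A/sT*x)^2 + -(A/sT*x)^2) := by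
      rw [Real.exp_add]; ring
    rw [h2, Real.exp_le_exp, hbx]
    rw [neg_div, ← neg_add, neg_le_neg_iff]
    rw [← add_div]
    have hnum : (0:ℝ) ≤ ρb * x^2 := by positivity
    rw [div_le_div_iff₀ (by positivity) (by positivity)]
    nlinarith [mul_pos hμ hT, mul_nonneg hnum (mul_pos hμ hT).le]
  calc (2/Real.sqrt Real.pi * (A/sT) * Real.exp (-(A/sT*x)^2)) ^ 2
      = (2/Real.sqrt Real.pi)^2 * A^2 * ((sT⁻¹ * sT⁻¹) * Real.exp (-(A/sT*x)^2)^2) := by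
        rw [div_eq_mul_inv A sT]; ring
    _ ≤ (2/Real.sqrt Real.pi)^2 * A^2 * (((Real.sqrt Λ)⁻¹ * sT⁻¹)
          * Real.exp (-(ρb * x^2) / (32 * μ * (t + Λ)))) := by
        gcongr <;> positivity
    _ = (2/Real.sqrt Real.pi)^2 * A^2 * Λ ^ (-(1:ℝ)/2) * kappa ρb μ Λ x t := by
        rw [hkap, hkapΛ]; ring

lemma stmt10_part3 (ρb μ : ℝ) (hρb : 0 < ρb) (hμ : 0 < μ) :
    ∃ C : ℝ, 0 < C ∧ ∀ Λ : ℝ, 1 ≤ Λ → ∀ x t : ℝ, 0 ≤ t →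
      |iteratedDeriv 2 (fun y => theta ρb μ Λ y t) x| ≤ C * (kappa ρb μ Λ x t) ^ 2 := by
  have hπ : (0:ℝ) < Real.sqrt Real.pi := Real.sqrt_pos.mpr Real.pi_pos
  have hA : (0:ℝ) < (1/2) * Real.sqrt (ρb/μ) := by
    have := Real.sqrt_pos.mpr (div_pos hρb hμ); linarith
  obtain ⟨M, hM0, hM⟩ := gauss_iter_bound 1 (δ := 1/4) (by norm_num) (by norm_num)
  refine ⟨(2/Real.sqrt Real.pi) * ((1/2)*Real.sqrt (ρb/μ))^2 * M, by positivity,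
    fun Λ hΛ x t ht => ?_⟩
  have hT : (0:ℝ) < t + Λ := by linarith
  have hsT : 0 < Real.sqrt (t+Λ) := Real.sqrt_pos.mpr hT
  have hsT2 : Real.sqrt (t+Λ)^2 = t+Λ := Real.sq_sqrt hT.le
  have ha2 : ((1/2) * Real.sqrt (ρb/μ))^2 = ρb/(4*μ) := by
    rw [mul_pow, Real.sq_sqrt (div_nonneg hρb.le hμ.le)]
    field_simp
    try ring
    try tauto
  have h2 := theta_iteratedDeriv ρb μ Λ t x 1
  norm_num at h2
  rw [h2]
  set A := (1/2) * Real.sqrt (ρb/μ) with hAdef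
  set sT := Real.sqrt (t+Λ) with hsTdef
  have hbx : (1/4 : ℝ) * (A/sT*x)^2 = ρb * x^2 / (16 * μ * (t+Λ)) := by
    have h1 : (A/sT*x)^2 = A^2*x^2/sT^2 := by ring
    rw [h1, hsT2, ha2]
    field_simp
    try ring
    try tauto
  have hkap : kappa ρb μ Λ x t = sT⁻¹ * Real.exp (-(ρb * x^2) / (32 * μ * (t + Λ))) := by
    unfold kappa
    rw [show (-(1:ℝ)/2) = -(1/2:ℝ) by norm_num, Real.rpow_neg hT.le, ← Real.sqrt_eq_rpow]
  have hkap2 : (kappa ρb μ Λ x t)^2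
      = sT⁻¹ * sT⁻¹ * Real.exp (-(ρb * x^2) / (16 * μ * (t + Λ))) := by
    rw [hkap, mul_pow]
    have he : Real.exp (-(ρb * x^2) / (32 * μ * (t + Λ))) ^ 2
        = Real.exp (-(ρb * x^2) / (32 * μ * (t + Λ)) + -(ρb * x^2) / (32 * μ * (t + Λ))) := by
      rw [Real.exp_add]; ring
    rw [he, ← add_div]
    have harg : (-(ρb * x^2) + -(ρb * x^2)) / (32 * μ * (t + Λ))
        = -(ρb * x^2) / (16 * μ * (t + Λ)) := by
      field_simp
      try ring
      try tauto
    rw [harg]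
    ring
  have hM1 : ∀ ξ : ℝ, |deriv gss ξ| ≤ M * Real.exp (-(1/4 * ξ^2)) := by
    intro ξ; rw [← iteratedDeriv_one]; exact hM ξ
  calc |2/Real.sqrt Real.pi * (A/sT)^2 * deriv gss (A/sT*x)|
      = 2/Real.sqrt Real.pi * (A/sT)^2 * |deriv gss (A/sT*x)| := by
        rw [abs_mul, abs_of_nonneg (by positivity)]
    _ ≤ 2/Real.sqrt Real.pi * (A/sT)^2 * (M * Real.exp (-(1/4 * (A/sT*x)^2))) := by
        gcongr
        exact hM1 _
    _ = 2/Real.sqrt Real.pi * A^2 * M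
          * (sT⁻¹ * sT⁻¹ * Real.exp (-(ρb * x^2) / (16 * μ * (t + Λ)))) := by
        rw [hbx, div_eq_mul_inv A sT, mul_pow, neg_div]
        ring
    _ = 2/Real.sqrt Real.pi * A^2 * M * (kappa ρb μ Λ x t)^2 := by rw [hkap2]

lemma stmt10_part4 (ρb μ : ℝ) (hρb : 0 < ρb) (hμ : 0 < μ) :
    ∃ C : ℝ, 0 < C ∧ ∀ Λ : ℝ, 1 ≤ Λ → ∀ x t : ℝ, 0 ≤ t →
      |deriv (fun s => deriv (fun y => theta ρb μ Λ y s) x) t|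
        ≤ C * Λ ^ (-(1:ℝ)/2) * (kappa ρb μ Λ x t) ^ 2 := by
  have hπ : (0:ℝ) < Real.sqrt Real.pi := Real.sqrt_pos.mpr Real.pi_pos
  have hA : (0:ℝ) < (1/2) * Real.sqrt (ρb/μ) := by
    have := Real.sqrt_pos.mpr (div_pos hρb hμ); linarith
  refine ⟨2 * ((2/Real.sqrt Real.pi) * ((1/2)*Real.sqrt (ρb/μ))), by positivity,
    fun Λ hΛ x t ht => ?_⟩
  have hΛ0 : (0:ℝ) < Λ := by linarith
  have hT : (0:ℝ) < t + Λ := by linarith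
  have hsT : 0 < Real.sqrt (t+Λ) := Real.sqrt_pos.mpr hT
  have hsΛ : 0 < Real.sqrt Λ := Real.sqrt_pos.mpr hΛ0
  have hsT2 : Real.sqrt (t+Λ)^2 = t+Λ := Real.sq_sqrt hT.le
  have ha2 : ((1/2) * Real.sqrt (ρb/μ))^2 = ρb/(4*μ) := by
    rw [mul_pow, Real.sq_sqrt (div_nonneg hρb.le hμ.le)]
    field_simp
    try ring
    try tauto
  set A := (1/2) * Real.sqrt (ρb/μ) with hAdef
  set c : ℝ := 2/Real.sqrt Real.pi with hcdef
  have hc : 0 < c := by positivity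
  set F : ℝ → ℝ := fun s => c * A * (Real.sqrt (s+Λ))⁻¹
      * Real.exp (-(A^2*x^2) * (s+Λ)⁻¹) with hFdef
  -- the inner derivative agrees with F near t
  have heq : (fun s => deriv (fun y => theta ρb μ Λ y s) x) =ᶠ[𝓝 t] F := by
    filter_upwards [eventually_gt_nhds (show -Λ < t by linarith)] with s hs
    have hS : 0 < s + Λ := by linarith
    have hsS : 0 < Real.sqrt (s+Λ) := Real.sqrt_pos.mpr hS
    rw [(theta_hasDerivAt ρb μ Λ s x).deriv]
    have harg : (A/Real.sqrt (s+Λ)*x)^2 = A^2*x^2 * (s+Λ)⁻¹ := by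
      have h1 : (A/Real.sqrt (s+Λ)*x)^2 = A^2*x^2/(Real.sqrt (s+Λ))^2 := by ring
      rw [h1, Real.sq_sqrt hS.le, div_eq_mul_inv]
    show c * (A/Real.sqrt (s+Λ)) * gss (A/Real.sqrt (s+Λ)*x) = F s
    unfold gss
    rw [hFdef]
    simp only
    rw [harg]
    ring
  rw [heq.deriv_eq]
  -- compute the derivative of F at t
  have h1 : HasDerivAt (fun s : ℝ => s + Λ) 1 t := (hasDerivAt_id t).add_const Λ
  have h2 : HasDerivAt (fun s => Real.sqrt (s+Λ)) (1/(2*Real.sqrt (t+Λ))) t := by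
    simpa [Function.comp_def] using (Real.hasDerivAt_sqrt hT.ne').comp t h1
  have h3 : HasDerivAt (fun s => (Real.sqrt (s+Λ))⁻¹)
      (-(1/(2*Real.sqrt (t+Λ))) / (Real.sqrt (t+Λ))^2) t := h2.inv hsT.ne'
  have h4 : HasDerivAt (fun s : ℝ => (s+Λ)⁻¹) (-1/(t+Λ)^2) t := by
    simpa [Pi.inv_def] using h1.inv hT.ne'
  have h5 : HasDerivAt (fun s : ℝ => -(A^2*x^2) * (s+Λ)⁻¹)
      (-(A^2*x^2) * (-1/(t+Λ)^2)) t := h4.const_mul _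
  have h6 : HasDerivAt (fun s : ℝ => Real.exp (-(A^2*x^2) * (s+Λ)⁻¹))
      (Real.exp (-(A^2*x^2) * (t+Λ)⁻¹) * (-(A^2*x^2) * (-1/(t+Λ)^2))) t := h5.exp
  have h7 : HasDerivAt F
      ((c * A * (-(1/(2*Real.sqrt (t+Λ))) / (Real.sqrt (t+Λ))^2))
          * Real.exp (-(A^2*x^2) * (t+Λ)⁻¹)
        + (c * A * (Real.sqrt (t+Λ))⁻¹)
          * (Real.exp (-(A^2*x^2) * (t+Λ)⁻¹) * (-(A^2*x^2) * (-1/(t+Λ)^2)))) t :=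
    ((h3.const_mul (c*A)).mul h6).congr_deriv (by ring)
  rw [h7.deriv]
  set w : ℝ := A^2*x^2 * (t+Λ)⁻¹ with hwdef
  have hw0 : 0 ≤ w := by positivity
  have hDval : (c * A * (-(1/(2*Real.sqrt (t+Λ))) / (Real.sqrt (t+Λ))^2))
          * Real.exp (-(A^2*x^2) * (t+Λ)⁻¹)
        + (c * A * (Real.sqrt (t+Λ))⁻¹)
          * (Real.exp (-(A^2*x^2) * (t+Λ)⁻¹) * (-(A^2*x^2) * (-1/(t+Λ)^2)))
      = c * A * (Real.sqrt (t+Λ))⁻¹ * (t+Λ)⁻¹ * Real.exp (-w) * (w - 1/2) := by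
    rw [hsT2, hwdef, neg_mul]
    field_simp
    ring
  rw [hDval]
  have habs : |c * A * (Real.sqrt (t+Λ))⁻¹ * (t+Λ)⁻¹ * Real.exp (-w) * (w - 1/2)|
      = c * A * (Real.sqrt (t+Λ))⁻¹ * (t+Λ)⁻¹ * Real.exp (-w) * |w - 1/2| := by
    rw [abs_mul, abs_of_nonneg (by positivity)]
  rw [habs]
  have hw12 : |w - 1/2| ≤ w + 1/2 := by
    rw [abs_le]; constructor <;> [linarith; linarith]
  have hkey : Real.exp (-w) * (w + 1/2) ≤ 2 * Real.exp (-(w/4)) := by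
    have h8 : w + 1/2 ≤ 2 * Real.exp ((3/4)*w) := by
      nlinarith [Real.add_one_le_exp ((3/4)*w)]
    calc Real.exp (-w) * (w + 1/2) ≤ Real.exp (-w) * (2 * Real.exp ((3/4)*w)) := by
          gcongr
      _ = 2 * Real.exp (-w + (3/4)*w) := by rw [Real.exp_add]; ring
      _ = 2 * Real.exp (-(w/4)) := by ring_nf
  have hkap : kappa ρb μ Λ x t
      = (Real.sqrt (t+Λ))⁻¹ * Real.exp (-(ρb * x^2) / (32 * μ * (t + Λ))) := by
    unfold kappa
    rw [show (-(1:ℝ)/2) = -(1/2:ℝ) by norm_num, Real.rpow_neg hT.le, ← Real.sqrt_eq_rpow]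
  have hkapΛ : Λ ^ (-(1:ℝ)/2) = (Real.sqrt Λ)⁻¹ := by
    rw [show (-(1:ℝ)/2) = -(1/2:ℝ) by norm_num, Real.rpow_neg hΛ0.le, ← Real.sqrt_eq_rpow]
  have hkap2 : (kappa ρb μ Λ x t)^2
      = (Real.sqrt (t+Λ))⁻¹ * (Real.sqrt (t+Λ))⁻¹
          * Real.exp (-(ρb * x^2) / (16 * μ * (t + Λ))) := by
    rw [hkap, mul_pow]
    have he : Real.exp (-(ρb * x^2) / (32 * μ * (t + Λ))) ^ 2
        = Real.exp (-(ρb * x^2) / (32 * μ * (t + Λ)) + -(ρb * x^2) / (32 * μ * (t + Λ))) := by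
      rw [Real.exp_add]; ring
    rw [he, ← add_div]
    have harg : (-(ρb * x^2) + -(ρb * x^2)) / (32 * μ * (t + Λ))
        = -(ρb * x^2) / (16 * μ * (t + Λ)) := by
      field_simp
      try ring
      try tauto
    rw [harg]
    ring
  have hw4 : Real.exp (-(w/4)) = Real.exp (-(ρb * x^2) / (16 * μ * (t + Λ))) := by
    congr 1
    rw [hwdef, ha2]
    field_simp
    try ring
    try tauto
  have hsTle : Real.sqrt Λ ≤ Real.sqrt (t+Λ) := Real.sqrt_le_sqrt (by linarith)
  have hsTinv : (Real.sqrt (t+Λ))⁻¹ ≤ (Real.sqrt Λ)⁻¹ := by gcongr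
  have hTinv : (t+Λ)⁻¹ = (Real.sqrt (t+Λ))⁻¹ * (Real.sqrt (t+Λ))⁻¹ := by
    rw [← mul_inv, ← sq]
    rw [hsT2]
  calc c * A * (Real.sqrt (t+Λ))⁻¹ * (t+Λ)⁻¹ * Real.exp (-w) * |w - 1/2|
      ≤ c * A * (Real.sqrt (t+Λ))⁻¹ * (t+Λ)⁻¹ * Real.exp (-w) * (w + 1/2) := by
        gcongr
    _ = c * A * (Real.sqrt (t+Λ))⁻¹ * (t+Λ)⁻¹ * (Real.exp (-w) * (w + 1/2)) := by ring
    _ ≤ c * A * (Real.sqrt (t+Λ))⁻¹ * (t+Λ)⁻¹ * (2 * Real.exp (-(w/4))) := by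
        gcongr
    _ ≤ c * A * (Real.sqrt Λ)⁻¹ * (t+Λ)⁻¹ * (2 * Real.exp (-(w/4))) := by
        gcongr
    _ = 2 * (c * A) * (Real.sqrt Λ)⁻¹
          * ((Real.sqrt (t+Λ))⁻¹ * (Real.sqrt (t+Λ))⁻¹
              * Real.exp (-(ρb * x^2) / (16 * μ * (t + Λ)))) := by
        rw [hw4, hTinv]; ring
    _ = 2 * (c * A) * Λ ^ (-(1:ℝ)/2) * (kappa ρb μ Λ x t)^2 := by
        rw [hkap2, hkapΛ]

/-- bounds of the derivatives of `θ` in terms of the weight `κ`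
(with constants depending only on `j, ρ̄, μ`):
(i) `|∂₃^j θ| ≤ C_j (t+Λ)^{-(j-1)/2} κ` for all `j ≥ 1`; (ii) `|∂₃θ|² ≤ C₁Λ^{-1/2}κ`;
(iii) `|∂₃²θ| ≤ C₂κ²`; (iv) `|∂ₜ∂₃θ| ≤ C₃Λ^{-1/2}κ²`, for all `x₃ ∈ ℝ, t ≥ 0`. -/
theorem stmt10 (ρb μ : ℝ) (hρb : 0 < ρb) (hμ : 0 < μ) :
    (∀ j : ℕ, 1 ≤ j → ∃ C : ℝ, 0 < C ∧ ∀ Λ : ℝ, 1 ≤ Λ → ∀ x t : ℝ, 0 ≤ t →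
      |iteratedDeriv j (fun y => theta ρb μ Λ y t) x|
        ≤ C * (t + Λ) ^ (-((j:ℝ) - 1)/2) * kappa ρb μ Λ x t) ∧
    (∃ C : ℝ, 0 < C ∧ ∀ Λ : ℝ, 1 ≤ Λ → ∀ x t : ℝ, 0 ≤ t →
      |deriv (fun y => theta ρb μ Λ y t) x| ^ 2
        ≤ C * Λ ^ (-(1:ℝ)/2) * kappa ρb μ Λ x t) ∧
    (∃ C : ℝ, 0 < C ∧ ∀ Λ : ℝ, 1 ≤ Λ → ∀ x t : ℝ, 0 ≤ t →
      |iteratedDeriv 2 (fun y => theta ρb μ Λ y t) x| ≤ C * (kappa ρb μ Λ x t) ^ 2) ∧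
    (∃ C : ℝ, 0 < C ∧ ∀ Λ : ℝ, 1 ≤ Λ → ∀ x t : ℝ, 0 ≤ t →
      |deriv (fun s => deriv (fun y => theta ρb μ Λ y s) x) t|
        ≤ C * Λ ^ (-(1:ℝ)/2) * (kappa ρb μ Λ x t) ^ 2) := by
  refine ⟨?_, stmt10_part2 ρb μ hρb hμ, stmt10_part3 ρb μ hρb hμ, stmt10_part4 ρb μ hρb hμ⟩
  intro j hj
  obtain ⟨m, rfl⟩ : ∃ m, j = m + 1 := ⟨j - 1, (Nat.succ_pred_eq_of_pos hj).symm⟩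
  exact stmt10_part1 ρb μ hρb hμ m
end

section
/- There exist constants c > 0 and C > 0, depending only on ρ̄, μ and γ, such that for all x₃ ∈ ℝ and t ≥ 0: 0 < ϑ₋(x₃,t)(1 + θ(x₃,t)) ≤ C e^{−c(t+Λ)} ( exp(−|x₃ − λ₀⁻(t+Λ)|²/(8(t+Λ))) + exp(−ρ̄ x₃²/(32μ(t+Λ))) ), and likewise 0 < ϑ₊(x₃,t)(1 − θ(x₃,t)) ≤ C e^{−c(t+Λ)} ( exp(−|x₃ − λ₃⁺(t+Λ)|²/(8(t+Λ))) + exp(−ρ̄ x₃²/(32μ(t+Λ))) ). -/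
open Real MeasureTheory Filter Topology

/-- The heat kernel profile `ϑ(x₃,t) = (2√(π(t+Λ)))⁻¹ exp(-x₃²/(4(t+Λ)))`. -/
noncomputable def vtheta (Λ : ℝ) (x t : ℝ) : ℝ :=
  (1 / (2 * Real.sqrt (Real.pi * (t + Λ)))) * Real.exp (-x^2 / (4 * (t + Λ)))

/-- The transversal characteristic speed `λ₀⁻ = -√(γρ̄^{γ-1})`. -/
noncomputable def lam0 (ρb γ : ℝ) : ℝ := -Real.sqrt (γ * ρb ^ (γ - 1))

/-- The transversal characteristic speed `λ₃⁺ = √(γρ̄^{γ-1})`. -/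
noncomputable def lam3 (ρb γ : ℝ) : ℝ := Real.sqrt (γ * ρb ^ (γ - 1))

/-- The diffusion wave `ϑ₋(x₃,t) = ϑ(x₃ - λ₀⁻(t+Λ), t)`. -/
noncomputable def vthm (ρb γ Λ : ℝ) (x t : ℝ) : ℝ :=
  vtheta Λ (x - lam0 ρb γ * (t + Λ)) t

/-- The diffusion wave `ϑ₊(x₃,t) = ϑ(x₃ - λ₃⁺(t+Λ), t)`. -/
noncomputable def vthp (ρb γ Λ : ℝ) (x t : ℝ) : ℝ :=
  vtheta Λ (x - lam3 ρb γ * (t + Λ)) t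

/-!
Write `s = t + Λ` and `L = λ₃⁺`. The wave `ϑ₊` is centred at `x₃ = L s`, far out where `θ` is
close to `1`; split the line at `x₃ = L s / 2`. Left of it, `|x₃ - L s| ≥ L s / 2`, so half of
the Gaussian exponent of `ϑ₊` already gives `e^{-L² s / 32}`. Right of it, `1 - θ` is a Gaussian
tail, at most `3 exp(-ρ̄ x₃² / (8 μ s))`, and three quarters of that exponent, with
`x₃ ≥ L s / 2`, give `e^{-3 ρ̄ L² s / (128 μ)}`. The bound for `ϑ₋ (1 + θ)` is its mirror image
under `x₃ ↦ -x₃`, because `θ` is odd in `x₃` and `λ₀⁻ = -λ₃⁺`.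
-/

lemma integrable_exp_neg_sq : Integrable (fun x : ℝ => exp (-x ^ 2)) := by
  simpa using integrable_exp_neg_mul_sq one_pos

lemma integral_exp_neg_sq_Ioi_pos (z : ℝ) : 0 < ∫ x in Set.Ioi z, exp (-x ^ 2) := by
  rw [setIntegral_pos_iff_support_of_nonneg_ae
    (Eventually.of_forall fun x => (exp_pos _).le) integrable_exp_neg_sq.integrableOn]
  simp [Function.support, (exp_pos _).ne']

lemma intervalIntegral_exp_neg_sq_add_integral_Ioi {z : ℝ} (hz : 0 ≤ z) :
    (∫ x in (0 : ℝ)..z, exp (-x ^ 2)) + ∫ x in Set.Ioi z, exp (-x ^ 2) = √π / 2 := by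
  have := integral_gaussian_Ioi 1
  simp only [neg_mul, one_mul, div_one] at this
  rw [intervalIntegral.integral_of_le hz, ← this, ← Set.Ioc_union_Ioi_eq_Ioi hz,
    setIntegral_union Set.Ioc_disjoint_Ioi_same measurableSet_Ioi
      integrable_exp_neg_sq.integrableOn integrable_exp_neg_sq.integrableOn]

lemma intervalIntegral_exp_neg_sq_lt (w : ℝ) : ∫ x in (0 : ℝ)..w, exp (-x ^ 2) < √π / 2 := by
  rcases le_or_gt w 0 with hw | hw
  · have : ∫ x in (0 : ℝ)..w, exp (-x ^ 2) ≤ 0 := by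
      rw [intervalIntegral.integral_of_ge hw, neg_nonpos]
      exact integral_nonneg fun _ => (exp_pos _).le
    linarith [sqrt_pos.mpr pi_pos]
  · linarith [intervalIntegral_exp_neg_sq_add_integral_Ioi hw.le, integral_exp_neg_sq_Ioi_pos w]

lemma intervalIntegral_exp_neg_sq_neg (w : ℝ) :
    ∫ x in (0 : ℝ)..-w, exp (-x ^ 2) = -∫ x in (0 : ℝ)..w, exp (-x ^ 2) := by
  have h := intervalIntegral.integral_comp_neg (a := 0) (b := w) fun x => exp (-x ^ 2)
  simp only [neg_sq, neg_zero] at h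
  rw [h, intervalIntegral.integral_symm]

lemma integral_exp_neg_sq_Ioi_le {z : ℝ} (hz : 0 ≤ z) :
    ∫ x in Set.Ioi z, exp (-x ^ 2) ≤ √(2 * π) * exp (-z ^ 2 / 2) := by
  have hint : Integrable (fun x : ℝ => exp (-2⁻¹ * x ^ 2)) :=
    integrable_exp_neg_mul_sq (by norm_num)
  calc ∫ x in Set.Ioi z, exp (-x ^ 2)
      ≤ ∫ x in Set.Ioi z, exp (-z ^ 2 / 2) * exp (-2⁻¹ * x ^ 2) := by
        refine setIntegral_mono_on integrable_exp_neg_sq.integrableOn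
          (hint.const_mul _).integrableOn measurableSet_Ioi fun x hx => ?_
        rw [← exp_add]
        apply exp_le_exp.mpr
        nlinarith [Set.mem_Ioi.mp hx]
    _ = exp (-z ^ 2 / 2) * ∫ x in Set.Ioi z, exp (-2⁻¹ * x ^ 2) := integral_const_mul _ _
    _ ≤ exp (-z ^ 2 / 2) * ∫ x, exp (-2⁻¹ * x ^ 2) :=
        mul_le_mul_of_nonneg_left
          (setIntegral_le_integral hint (Eventually.of_forall fun _ => (exp_pos _).le))
          (exp_pos _).le
    _ = √(2 * π) * exp (-z ^ 2 / 2) := by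
        rw [integral_gaussian, mul_comm, div_inv_eq_mul, mul_comm π]

section Theta

variable (ρb μ : ℝ)

lemma Theta_neg (ξ : ℝ) : Theta ρb μ (-ξ) = -Theta ρb μ ξ := by
  rw [Theta, Theta, mul_neg, intervalIntegral_exp_neg_sq_neg, mul_neg]

lemma Theta_lt_one (ξ : ℝ) : Theta ρb μ ξ < 1 := by
  have hπ : 0 < √π := sqrt_pos.mpr pi_pos
  have h := intervalIntegral_exp_neg_sq_lt ((1 / 2) * √(ρb / μ) * ξ)
  rw [Theta, ← lt_div_iff₀' (by positivity), div_div_eq_mul_div, one_mul]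
  exact h

lemma neg_one_lt_Theta (ξ : ℝ) : -1 < Theta ρb μ ξ := by
  linarith [Theta_lt_one ρb μ (-ξ), Theta_neg ρb μ ξ]

variable {ρb μ}

lemma one_sub_Theta_le (hρμ : 0 ≤ ρb / μ) {ξ : ℝ} (hξ : 0 ≤ ξ) :
    1 - Theta ρb μ ξ ≤ 3 * exp (-(ρb / μ * ξ ^ 2) / 8) := by
  set w := (1 / 2) * √(ρb / μ) * ξ with hw
  have hπ : 0 < √π := sqrt_pos.mpr pi_pos
  have hw0 : 0 ≤ w := by positivity
  have hw2 : -w ^ 2 / 2 = -(ρb / μ * ξ ^ 2) / 8 := by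
    rw [hw, mul_pow, mul_pow, sq_sqrt hρμ]; ring
  have h2 : 2 / √π * √(2 * π) ≤ 3 := by
    have : 2 / √π * √(2 * π) = 2 * √2 := by rw [sqrt_mul zero_le_two]; field_simp
    rw [this]
    nlinarith [sq_sqrt (zero_le_two : (0 : ℝ) ≤ 2), sqrt_nonneg 2]
  calc 1 - Theta ρb μ ξ = 2 / √π * ∫ x in Set.Ioi w, exp (-x ^ 2) := by
        rw [Theta, ← hw, eq_sub_of_add_eq (intervalIntegral_exp_neg_sq_add_integral_Ioi hw0)]
        field_simp
        ring
    _ ≤ 2 / √π * (√(2 * π) * exp (-w ^ 2 / 2)) := by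
        gcongr; exact integral_exp_neg_sq_Ioi_le hw0
    _ ≤ 3 * exp (-(ρb / μ * ξ ^ 2) / 8) := by
        rw [← mul_assoc, hw2]; gcongr

end Theta

lemma exp_neg_add_le_exp_neg_mul {a b c : ℝ} (h : c ≤ b) :
    exp (-(a + b)) ≤ exp (-c) * exp (-a) := by
  rw [← exp_add]
  exact exp_le_exp.mpr (by linarith)

lemma one_div_two_mul_sqrt_pi_mul_le_one {s : ℝ} (hs : 1 ≤ s) : 1 / (2 * √(π * s)) ≤ 1 := by
  have h : 1 ≤ √(π * s) := one_le_sqrt.mpr (by nlinarith [pi_gt_three])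
  rw [div_le_one (by positivity)]
  linarith

section DiffusionWave

variable {ρb μ L s c : ℝ}

noncomputable def decayRate (ρb μ L : ℝ) : ℝ := min (L ^ 2 / 32) (3 * ρb * L ^ 2 / (128 * μ))

lemma decayRate_pos (hρb : 0 < ρb) (hμ : 0 < μ) (hL : L ≠ 0) : 0 < decayRate ρb μ L := by
  exact lt_min (by positivity) (by positivity)

lemma exp_neg_sq_div_four_le (hL : 0 ≤ L) (hs : 0 < s) (hc : c ≤ L ^ 2 / 32) {x : ℝ}
    (hx : x ≤ L * s / 2) :
    exp (-(x - L * s) ^ 2 / (4 * s)) ≤ exp (-c * s) * exp (-(x - L * s) ^ 2 / (8 * s)) := by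
  have hsq : (L * s / 2) ^ 2 ≤ (x - L * s) ^ 2 := by nlinarith [mul_nonneg hL hs.le]
  have hcs : c * s ≤ (x - L * s) ^ 2 / (8 * s) := by
    rw [le_div_iff₀ (by positivity)]
    nlinarith [mul_le_mul_of_nonneg_right hc (by positivity : (0 : ℝ) ≤ s * (8 * s))]
  have key := exp_neg_add_le_exp_neg_mul (a := (x - L * s) ^ 2 / (8 * s)) hcs
  rw [← neg_mul] at key
  rw [neg_div, neg_div]
  convert key using 2
  field_simp
  ring

lemma exp_neg_mul_sq_div_eight_le (hρb : 0 < ρb) (hμ : 0 < μ) (hL : 0 ≤ L) (hs : 0 < s)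
    (hc : c ≤ 3 * ρb * L ^ 2 / (128 * μ)) {x : ℝ} (hx : L * s / 2 ≤ x) :
    exp (-(ρb * x ^ 2) / (8 * μ * s))
      ≤ exp (-c * s) * exp (-(ρb * x ^ 2) / (32 * μ * s)) := by
  have hsq : (L * s / 2) ^ 2 ≤ x ^ 2 := pow_le_pow_left₀ (by positivity) hx 2
  have hcs : c * s ≤ 3 * (ρb * x ^ 2) / (32 * μ * s) := by
    rw [le_div_iff₀ (by positivity)]
    rw [le_div_iff₀ (by positivity)] at hc
    nlinarith [mul_le_mul_of_nonneg_right hc (by positivity : (0 : ℝ) ≤ s ^ 2),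
      mul_le_mul_of_nonneg_left hsq (by positivity : (0 : ℝ) ≤ 3 * ρb)]
  have key := exp_neg_add_le_exp_neg_mul (a := ρb * x ^ 2 / (32 * μ * s)) hcs
  rw [← neg_mul] at key
  rw [neg_div, neg_div]
  convert key using 2
  field_simp
  ring

lemma heatKernel_mul_one_sub_Theta_le (hρb : 0 < ρb) (hμ : 0 < μ) (hL : 0 ≤ L) (hs : 1 ≤ s)
    (x : ℝ) :
    1 / (2 * √(π * s)) * exp (-(x - L * s) ^ 2 / (4 * s)) * (1 - Theta ρb μ (x / √s))
      ≤ 3 * exp (-decayRate ρb μ L * s) *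
          (exp (-(x - L * s) ^ 2 / (8 * s)) + exp (-(ρb * x ^ 2) / (32 * μ * s))) := by
  set E := exp (-decayRate ρb μ L * s)
  set G₁ := exp (-(x - L * s) ^ 2 / (8 * s))
  set G₂ := exp (-(ρb * x ^ 2) / (32 * μ * s))
  have hs0 : 0 < s := by linarith
  have hκ : 1 / (2 * √(π * s)) ≤ 1 := one_div_two_mul_sqrt_pi_mul_le_one hs
  have hg : exp (-(x - L * s) ^ 2 / (4 * s)) ≤ 1 := exp_le_one_iff.mpr (by
    rw [neg_div]; exact neg_nonpos.mpr (by positivity))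
  have hΘ₁ := Theta_lt_one ρb μ (x / √s)
  have hΘ₂ := neg_one_lt_Theta ρb μ (x / √s)
  have hEG : 0 ≤ E * G₁ ∧ 0 ≤ E * G₂ := ⟨by positivity, by positivity⟩
  rcases le_or_gt x (L * s / 2) with hx | hx
  · calc _ ≤ exp (-(x - L * s) ^ 2 / (4 * s)) * 2 :=
          mul_le_mul (mul_le_of_le_one_left (exp_pos _).le hκ) (by linarith) (by linarith)
            (exp_pos _).le
      _ ≤ E * G₁ * 2 := by
          gcongr; exact exp_neg_sq_div_four_le hL hs0 (min_le_left _ _) hx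
      _ ≤ _ := by nlinarith
  · calc _ ≤ 1 * (1 - Theta ρb μ (x / √s)) :=
          mul_le_mul_of_nonneg_right (mul_le_one₀ hκ (exp_pos _).le hg) (by linarith)
      _ ≤ 3 * exp (-(ρb / μ * (x / √s) ^ 2) / 8) := by
          rw [one_mul]
          exact one_sub_Theta_le (by positivity) (div_nonneg (by linarith [mul_nonneg hL hs0.le])
            (sqrt_nonneg _))
      _ = 3 * exp (-(ρb * x ^ 2) / (8 * μ * s)) := by
          rw [div_pow, sq_sqrt hs0.le]
          field_simp
      _ ≤ 3 * (E * G₂) := by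
          gcongr; exact exp_neg_mul_sq_div_eight_le hρb hμ hL hs0 (min_le_right _ _) hx.le
      _ ≤ _ := by nlinarith

end DiffusionWave

lemma lam3_pos {ρb γ : ℝ} (hρb : 0 < ρb) (hγ : 0 < γ) : 0 < lam3 ρb γ :=
  sqrt_pos.mpr (mul_pos hγ (rpow_pos_of_pos hρb _))

lemma sub_lam0_mul_sq (ρb γ x s : ℝ) : (x - lam0 ρb γ * s) ^ 2 = (-x - lam3 ρb γ * s) ^ 2 := by
  rw [lam0, lam3]; ring

lemma vthm_mul_one_add_theta (ρb μ γ Λ x t : ℝ) :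
    vthm ρb γ Λ x t * (1 + theta ρb μ Λ x t) = vthp ρb γ Λ (-x) t * (1 - theta ρb μ Λ (-x) t) := by
  rw [vthm, vthp, vtheta, vtheta, sub_lam0_mul_sq, theta, theta, neg_div (√(t + Λ)) x,
    Theta_neg, sub_neg_eq_add]

lemma vthp_mul_one_sub_theta_pos (ρb μ γ : ℝ) {Λ t : ℝ} (hs : 0 < t + Λ) (x : ℝ) :
    0 < vthp ρb γ Λ x t * (1 - theta ρb μ Λ x t) := by
  have := Theta_lt_one ρb μ (x / √(t + Λ))
  rw [vthp, vtheta, theta]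
  have : 0 < √(π * (t + Λ)) := sqrt_pos.mpr (by positivity)
  exact mul_pos (by positivity) (by linarith)

lemma vthp_mul_one_sub_theta_le {ρb μ : ℝ} (hρb : 0 < ρb) (hμ : 0 < μ) (γ : ℝ) {Λ t : ℝ}
    (hs : 1 ≤ t + Λ) (x : ℝ) :
    vthp ρb γ Λ x t * (1 - theta ρb μ Λ x t)
      ≤ 3 * exp (-decayRate ρb μ (lam3 ρb γ) * (t + Λ)) *
          (exp (-(x - lam3 ρb γ * (t + Λ)) ^ 2 / (8 * (t + Λ)))
            + exp (-(ρb * x ^ 2) / (32 * μ * (t + Λ)))) :=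
  heatKernel_mul_one_sub_Theta_le hρb hμ (sqrt_nonneg _) hs x

/-- the products `ϑ₋(1+θ)` and `ϑ₊(1-θ)` are positive and exponentially
small in time, with Gaussian tails in space; `c, C` depend only on `ρ̄, μ, γ`. -/
theorem stmt16 (ρb μ γ : ℝ) (hρb : 0 < ρb) (hμ : 0 < μ) (hγ : 1 < γ) :
    ∃ c : ℝ, 0 < c ∧ ∃ C : ℝ, 0 < C ∧
    ∀ Λ : ℝ, 1 ≤ Λ → ∀ x t : ℝ, 0 ≤ t →
      (0 < vthm ρb γ Λ x t * (1 + theta ρb μ Λ x t) ∧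
        vthm ρb γ Λ x t * (1 + theta ρb μ Λ x t)
          ≤ C * Real.exp (-c * (t + Λ)) *
              (Real.exp (-(x - lam0 ρb γ * (t + Λ))^2 / (8 * (t + Λ)))
                + Real.exp (-(ρb * x^2) / (32 * μ * (t + Λ))))) ∧
      (0 < vthp ρb γ Λ x t * (1 - theta ρb μ Λ x t) ∧
        vthp ρb γ Λ x t * (1 - theta ρb μ Λ x t)
          ≤ C * Real.exp (-c * (t + Λ)) *
              (Real.exp (-(x - lam3 ρb γ * (t + Λ))^2 / (8 * (t + Λ)))
                + Real.exp (-(ρb * x^2) / (32 * μ * (t + Λ))))) := by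
  refine ⟨decayRate ρb μ (lam3 ρb γ),
    decayRate_pos hρb hμ (lam3_pos hρb (by linarith)).ne', 3, three_pos, fun Λ hΛ x t ht => ?_⟩
  have hs : 1 ≤ t + Λ := by linarith
  have hpos := vthp_mul_one_sub_theta_pos ρb μ γ (by linarith : 0 < t + Λ)
  have hle := vthp_mul_one_sub_theta_le hρb hμ γ hs
  refine ⟨?_, hpos x, hle x⟩
  rw [vthm_mul_one_add_theta, sub_lam0_mul_sq, ← neg_sq x]
  exact ⟨hpos (-x), hle (-x)⟩
end

section
/- Let f : ℝ → ℝ be measurable with ∫_ℝ (x² + 1)^{3/2} f(x)² dx < ∞ and ∫_ℝ f(x) dx = 0 (note that the weighted bound implies f ∈ L¹(ℝ)). Then the anti-derivative F(x) := ∫_{−∞}^{x} f(y) dy belongs to L²(ℝ), and there is an absolute constant C > 0 such that ‖F‖²_{L²(ℝ)} ≤ C ∫_ℝ (x² + 1)^{3/2} f(x)² dx. -/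
/-!
Write `I = ∫ (y²+1)^{3/2} f²`. Cauchy–Schwarz with the weight `(y²+1)^{3/2}` bounds `F(x)²` by
`I · ∫ (y²+1)^{-3/2}` over a half-line: over `(-∞, x]` when `x ≤ 0`, and, using `∫ f = 0` to
write `F(x) = -∫_x^∞ f`, over `(x, ∞)` when `x ≥ 0`. Both tails of `(y²+1)^{-3/2}` (whose
antiderivative is `y / √(y²+1)`) are at most `(1+x²)⁻¹`, so `F(x)² ≤ I / (1+x²)`, and integrating
gives `‖F‖₂² ≤ π I`.
-/

open Real MeasureTheory Filter Topology Set

section WeightedCauchySchwarz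

variable {α : Type*} [MeasurableSpace α] {μ : Measure α} {f w : α → ℝ}

lemma memLp_two_inv_sqrt (hw : ∀ x, 0 < w x) (hwinv : Integrable (fun x => (w x)⁻¹) μ) :
    MemLp (fun x => (√(w x))⁻¹) 2 μ := by
  have hmeas : AEStronglyMeasurable (fun x => (√(w x))⁻¹) μ := by
    simpa only [Real.sqrt_inv] using hwinv.aemeasurable.sqrt.aestronglyMeasurable
  refine (memLp_two_iff_integrable_sq hmeas).2 (hwinv.congr (ae_of_all _ fun x => ?_))
  simp only [inv_pow, Real.sq_sqrt (hw x).le]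

lemma memLp_two_sqrt_mul_abs (hw : ∀ x, 0 < w x) (hf : AEStronglyMeasurable f μ)
    (hwinv : Integrable (fun x => (w x)⁻¹) μ) (hwf : Integrable (fun x => w x * f x ^ 2) μ) :
    MemLp (fun x => √(w x) * |f x|) 2 μ := by
  have hw_meas : AEMeasurable w μ := by
    simpa only [Pi.inv_def, inv_inv] using hwinv.aemeasurable.inv
  refine (memLp_two_iff_integrable_sq (hw_meas.sqrt.aestronglyMeasurable.mul
    (continuous_abs.comp_aestronglyMeasurable hf))).2 ?_
  refine hwf.congr (ae_of_all _ fun x => ?_)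
  simp only [Pi.mul_apply, mul_pow, Real.sq_sqrt (hw x).le, sq_abs]

lemma integrable_of_integrable_mul_sq (hw : ∀ x, 0 < w x) (hf : AEStronglyMeasurable f μ)
    (hwinv : Integrable (fun x => (w x)⁻¹) μ) (hwf : Integrable (fun x => w x * f x ^ 2) μ) :
    Integrable f μ := by
  refine ((memLp_two_inv_sqrt hw hwinv).integrable_mul
    (memLp_two_sqrt_mul_abs hw hf hwinv hwf)).mono' hf (ae_of_all _ fun x => ?_)
  rw [Pi.mul_apply, inv_mul_cancel_left₀ (Real.sqrt_pos.2 (hw _)).ne', Real.norm_eq_abs]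

lemma sq_integral_le_integral_inv_mul_integral_mul_sq (hw : ∀ x, 0 < w x)
    (hf : AEStronglyMeasurable f μ) (hwinv : Integrable (fun x => (w x)⁻¹) μ)
    (hwf : Integrable (fun x => w x * f x ^ 2) μ) :
    (∫ x, f x ∂μ) ^ 2 ≤ (∫ x, (w x)⁻¹ ∂μ) * ∫ x, w x * f x ^ 2 ∂μ := by
  have holder := integral_mul_le_Lp_mul_Lq_of_nonneg Real.HolderConjugate.two_two
    (f := fun x => (√(w x))⁻¹) (g := fun x => √(w x) * |f x|)
    (ae_of_all μ fun x => inv_nonneg.2 (Real.sqrt_nonneg _))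
    (ae_of_all μ fun x => mul_nonneg (Real.sqrt_nonneg _) (abs_nonneg (f x)))
    (by simpa using memLp_two_inv_sqrt hw hwinv)
    (by simpa using memLp_two_sqrt_mul_abs hw hf hwinv hwf)
  simp only [inv_mul_cancel_left₀ (Real.sqrt_pos.2 (hw _)).ne', Real.rpow_two, mul_pow, inv_pow,
    sq_abs, Real.sq_sqrt (hw _).le] at holder
  calc (∫ x, f x ∂μ) ^ 2 = |∫ x, f x ∂μ| ^ 2 := (sq_abs _).symm
    _ ≤ (∫ x, |f x| ∂μ) ^ 2 := by
        gcongr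
        exact abs_integral_le_integral_abs
    _ ≤ ((∫ x, (w x)⁻¹ ∂μ) ^ (1 / 2 : ℝ) * (∫ x, w x * f x ^ 2 ∂μ) ^ (1 / 2 : ℝ)) ^ 2 :=
        pow_le_pow_left₀ (integral_nonneg fun x => abs_nonneg _) holder 2
    _ = (∫ x, (w x)⁻¹ ∂μ) * ∫ x, w x * f x ^ 2 ∂μ := by
        rw [← Real.sqrt_eq_rpow, ← Real.sqrt_eq_rpow, mul_pow,
          Real.sq_sqrt (integral_nonneg fun x => (inv_pos.2 (hw x)).le),
          Real.sq_sqrt (integral_nonneg fun x => mul_nonneg (hw x).le (sq_nonneg _))]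

end WeightedCauchySchwarz

lemma one_sub_div_sqrt_sq_add_one_le {x : ℝ} (hx : 0 ≤ x) :
    1 - x / √(x ^ 2 + 1) ≤ (1 + x ^ 2)⁻¹ := by
  have hs : 0 < √(x ^ 2 + 1) := Real.sqrt_pos.2 (by positivity)
  have hsq : √(x ^ 2 + 1) ^ 2 = x ^ 2 + 1 := Real.sq_sqrt (by positivity)
  have hxs : x ≤ √(x ^ 2 + 1) := Real.le_sqrt_of_sq_le (by linarith)
  rw [show (1 + x ^ 2)⁻¹ = 1 / √(x ^ 2 + 1) ^ 2 by rw [hsq, add_comm, one_div],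
    one_sub_div hs.ne', div_le_div_iff₀ hs (by positivity)]
  nlinarith [mul_nonneg (mul_nonneg hs.le hx) (sub_nonneg.2 hxs)]

lemma hasDerivAt_div_sqrt_sq_add_one (t : ℝ) :
    HasDerivAt (fun t => t / √(t ^ 2 + 1)) ((t ^ 2 + 1) ^ ((3 : ℝ) / 2))⁻¹ t := by
  have hpos : 0 < t ^ 2 + 1 := by positivity
  have hsq : √(t ^ 2 + 1) ^ 2 = t ^ 2 + 1 := Real.sq_sqrt hpos.le
  have hsqrt := ((hasDerivAt_pow 2 t).add_const 1).sqrt hpos.ne'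
  refine ((hasDerivAt_id t).div hsqrt (Real.sqrt_pos.2 hpos).ne').congr_deriv ?_
  rw [show (3 : ℝ) / 2 = 1 + 1 / 2 by norm_num, Real.rpow_add hpos, Real.rpow_one,
    ← Real.sqrt_eq_rpow]
  field_simp
  simp only [id, Nat.cast_ofNat]
  linear_combination (2 * t ^ 2) * hsq

lemma tendsto_div_sqrt_sq_add_one_atTop :
    Tendsto (fun t => t / √(t ^ 2 + 1)) atTop (𝓝 1) := by
  have hlow : Tendsto (fun t : ℝ => 1 - (1 + t ^ 2)⁻¹) atTop (𝓝 1) := by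
    simpa using (tendsto_inv_atTop_zero.comp
      (tendsto_atTop_add_const_left _ 1 (tendsto_pow_atTop (α := ℝ) two_ne_zero))).const_sub 1
  refine tendsto_of_tendsto_of_tendsto_of_le_of_le' hlow tendsto_const_nhds ?_ ?_
  · filter_upwards [eventually_ge_atTop 0] with t ht
    linarith [one_sub_div_sqrt_sq_add_one_le ht]
  · filter_upwards with t
    rw [div_le_one (Real.sqrt_pos.2 (by positivity))]
    exact Real.le_sqrt_of_sq_le (by linarith)

lemma tendsto_div_sqrt_sq_add_one_atBot :
    Tendsto (fun t => t / √(t ^ 2 + 1)) atBot (𝓝 (-1)) := by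
  convert (tendsto_div_sqrt_sq_add_one_atTop.comp tendsto_neg_atBot_atTop).neg using 2 with t
  simp [neg_div]

lemma integrable_inv_rpow_three_halves :
    Integrable fun x : ℝ => ((x ^ 2 + 1) ^ ((3 : ℝ) / 2))⁻¹ := by
  refine (integrable_rpow_neg_one_add_norm_sq (E := ℝ) (r := 3) (by simp)).congr
    (ae_of_all _ fun x => ?_)
  dsimp only
  rw [Real.norm_eq_abs, sq_abs, add_comm, neg_div, Real.rpow_neg (by positivity)]

lemma integral_Ioi_inv_rpow_three_halves (x : ℝ) :
    ∫ y in Ioi x, ((y ^ 2 + 1) ^ ((3 : ℝ) / 2))⁻¹ = 1 - x / √(x ^ 2 + 1) :=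
  integral_Ioi_of_hasDerivAt_of_tendsto' (fun y _ => hasDerivAt_div_sqrt_sq_add_one y)
    integrable_inv_rpow_three_halves.integrableOn tendsto_div_sqrt_sq_add_one_atTop

lemma integral_Iic_inv_rpow_three_halves (x : ℝ) :
    ∫ y in Iic x, ((y ^ 2 + 1) ^ ((3 : ℝ) / 2))⁻¹ = 1 - (-x) / √((-x) ^ 2 + 1) := by
  rw [integral_Iic_of_hasDerivAt_of_tendsto' (fun y _ => hasDerivAt_div_sqrt_sq_add_one y)
    integrable_inv_rpow_three_halves.integrableOn tendsto_div_sqrt_sq_add_one_atBot]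
  rw [neg_sq, neg_div]
  ring

lemma MeasureTheory.Integrable.continuous_integral_Iic {E : Type*} [NormedAddCommGroup E]
    [NormedSpace ℝ E] {μ : Measure ℝ} [NullSingletonClass μ] {f : ℝ → E}
    (hf : Integrable f μ) : Continuous fun x => ∫ y in Iic x, f y ∂μ := by
  have h : (fun x => ∫ y in Iic x, f y ∂μ)
      = fun x => (∫ y in Iic 0, f y ∂μ) + ∫ y in (0 : ℝ)..x, f y ∂μ := by
    funext x
    rw [← intervalIntegral.integral_Iic_sub_Iic hf.integrableOn hf.integrableOn,
      add_sub_cancel]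
  rw [h]
  exact continuous_const.add (hf.continuous_primitive 0)

lemma integral_Iic_eq_neg_integral_Ioi_of_integral_eq_zero {E : Type*} [NormedAddCommGroup E]
    [NormedSpace ℝ E] {μ : Measure ℝ} {f : ℝ → E} (hf : Integrable f μ) (h0 : ∫ y, f y ∂μ = 0)
    (x : ℝ) : ∫ y in Iic x, f y ∂μ = -∫ y in Ioi x, f y ∂μ :=
  eq_neg_of_add_eq_zero_left <|
    (intervalIntegral.integral_Iic_add_Ioi hf.integrableOn hf.integrableOn).trans h0

section WeightThreeHalves

variable {f : ℝ → ℝ} (hf : AEStronglyMeasurable f)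
  (hI : Integrable fun x => (x ^ 2 + 1) ^ ((3 : ℝ) / 2) * f x ^ 2)
include hf hI

lemma integrable_of_integrable_rpow_three_halves_mul_sq : Integrable f :=
  integrable_of_integrable_mul_sq (fun _ => by positivity) hf
    integrable_inv_rpow_three_halves hI

lemma sq_setIntegral_le_integral_inv_weight_mul (s : Set ℝ) :
    (∫ y in s, f y) ^ 2 ≤ (∫ y in s, ((y ^ 2 + 1) ^ ((3 : ℝ) / 2))⁻¹) *
      ∫ y, (y ^ 2 + 1) ^ ((3 : ℝ) / 2) * f y ^ 2 :=
  (sq_integral_le_integral_inv_mul_integral_mul_sq (fun _ => by positivity) hf.restrict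
    integrable_inv_rpow_three_halves.integrableOn hI.integrableOn).trans <|
    mul_le_mul_of_nonneg_left (setIntegral_le_integral hI (ae_of_all _ fun _ => by positivity))
      (integral_nonneg fun _ => by positivity)

lemma sq_integral_Iic_le_mul_inv_one_add_sq (h0 : ∫ x, f x = 0) (x : ℝ) :
    (∫ y in Iic x, f y) ^ 2 ≤
      (∫ y, (y ^ 2 + 1) ^ ((3 : ℝ) / 2) * f y ^ 2) * (1 + x ^ 2)⁻¹ := by
  have hI_nonneg : 0 ≤ ∫ y, (y ^ 2 + 1) ^ ((3 : ℝ) / 2) * f y ^ 2 :=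
    integral_nonneg fun _ => by positivity
  rw [mul_comm]
  rcases le_total x 0 with hx | hx
  · refine (sq_setIntegral_le_integral_inv_weight_mul hf hI _).trans
      (mul_le_mul_of_nonneg_right ?_ hI_nonneg)
    rw [integral_Iic_inv_rpow_three_halves, ← neg_sq x]
    exact one_sub_div_sqrt_sq_add_one_le (neg_nonneg.2 hx)
  · rw [integral_Iic_eq_neg_integral_Ioi_of_integral_eq_zero
      (integrable_of_integrable_rpow_three_halves_mul_sq hf hI) h0, neg_sq]
    refine (sq_setIntegral_le_integral_inv_weight_mul hf hI _).trans
      (mul_le_mul_of_nonneg_right ?_ hI_nonneg)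
    rw [integral_Ioi_inv_rpow_three_halves]
    exact one_sub_div_sqrt_sq_add_one_le hx

end WeightThreeHalves

/-- if `f` is measurable with `∫(x²+1)^{3/2}f² < ∞` and `∫f = 0`, then the
anti-derivative `F(x) = ∫_{-∞}^x f` lies in `L²(ℝ)`, with
`‖F‖²_{L²} ≤ C ∫(x²+1)^{3/2}f²` for an absolute constant `C`. -/
theorem stmt17 :
    ∃ C : ℝ, 0 < C ∧
    ∀ f : ℝ → ℝ, Measurable f →
      Integrable (fun x => (x^2 + 1) ^ ((3:ℝ)/2) * (f x)^2) →
      (∫ x : ℝ, f x) = 0 →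
      MemLp (fun x => ∫ y in Set.Iic x, f y) 2 (volume : Measure ℝ) ∧
      (∫ x : ℝ, (∫ y in Set.Iic x, f y)^2)
        ≤ C * ∫ x : ℝ, (x^2 + 1) ^ ((3:ℝ)/2) * (f x)^2 := by
  refine ⟨π, pi_pos, fun f hf hI h0 => ?_⟩
  set I := ∫ x, (x ^ 2 + 1) ^ ((3 : ℝ) / 2) * f x ^ 2
  have hF : Continuous fun x => ∫ y in Iic x, f y :=
    (integrable_of_integrable_rpow_three_halves_mul_sq hf.aestronglyMeasurable hI
      ).continuous_integral_Iic
  have hbound := sq_integral_Iic_le_mul_inv_one_add_sq hf.aestronglyMeasurable hI h0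
  have hdom : Integrable fun x : ℝ => I * (1 + x ^ 2)⁻¹ := integrable_inv_one_add_sq.const_mul I
  have hF2 : Integrable fun x => (∫ y in Iic x, f y) ^ 2 :=
    hdom.mono' (hF.pow 2).aestronglyMeasurable
      (ae_of_all _ fun x => by simpa only [Real.norm_eq_abs, abs_sq] using hbound x)
  refine ⟨(memLp_two_iff_integrable_sq hF.aestronglyMeasurable).2 hF2, ?_⟩
  calc ∫ x, (∫ y in Iic x, f y) ^ 2 ≤ ∫ x, I * (1 + x ^ 2)⁻¹ := integral_mono hF2 hdom hbound
    _ = π * I := by rw [integral_const_mul, integral_univ_inv_one_add_sq, mul_comm]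
end
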